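/- arXiv:2001.09811 — 3 statements merged into one kernel-verified Lean document; each statement's English description precedes it below -/
import Mathlib

section
/- Let S₁ : E → F be an isometry between Hilbert spaces, R₁ : E → E an isometry and R₂ : E → G a co-isometry satisfying R₂ R₁ = 0 and R₁ R₁* + R₂* R₂ = id_E. Then the operator S : F → F ⊕ G defined in block form by S = (I − S₁S₁* + S₁R₁*S₁*, R₂S₁*)ᵀ is a unitary. -/
/-!
Write `P = S₁S₁*`. Since `S₁` is an isometry, `X ↦ 1 - P + S₁ X S₁*` is a unital
`*`-homomorphism from operators on `E` to operators on `F`, and the first entry of `S` is the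
image of `R₁*`. Hence `S*S = 1 - P + S₁ (R₁R₁* + R₂*R₂) S₁* = 1`, while the entries of `SS*` are
the image of `R₁*R₁ = 1`, the off-diagonal `S₁R₁*R₂* = S₁ (R₂R₁)* = 0` and its adjoint, and
`R₂S₁*S₁R₂* = R₂R₂* = 1`.
-/

open ContinuousLinearMap

section BlockOperators

variable {𝕜 : Type*} [RCLike 𝕜] {F G H : Type*}
  [NormedAddCommGroup F] [InnerProductSpace 𝕜 F]
  [NormedAddCommGroup G] [InnerProductSpace 𝕜 G]
  [NormedAddCommGroup H] [InnerProductSpace 𝕜 H]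

noncomputable def blockColumn (A : H →L[𝕜] F) (B : H →L[𝕜] G) : H →L[𝕜] WithLp 2 (F × G) :=
  (WithLp.prodContinuousLinearEquiv 2 𝕜 F G).symm.toContinuousLinearMap ∘L A.prod B

noncomputable def blockRow (C : F →L[𝕜] H) (D : G →L[𝕜] H) : WithLp 2 (F × G) →L[𝕜] H :=
  C.coprod D ∘L (WithLp.prodContinuousLinearEquiv 2 𝕜 F G).toContinuousLinearMap

@[simp]
theorem blockColumn_apply (A : H →L[𝕜] F) (B : H →L[𝕜] G) (x : H) :
    blockColumn A B x = WithLp.toLp 2 (A x, B x) := rfl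

@[simp]
theorem blockRow_apply (C : F →L[𝕜] H) (D : G →L[𝕜] H) (z : WithLp 2 (F × G)) :
    blockRow C D z = C z.fst + D z.snd := rfl

theorem blockRow_comp_blockColumn (A : H →L[𝕜] F) (B : H →L[𝕜] G)
    (C : F →L[𝕜] H) (D : G →L[𝕜] H) :
    blockRow C D ∘L blockColumn A B = C ∘L A + D ∘L B := rfl

theorem blockColumn_comp_blockRow_eq_id {A : H →L[𝕜] F} {B : H →L[𝕜] G}
    {C : F →L[𝕜] H} {D : G →L[𝕜] H} (hAC : A ∘L C = 1) (hAD : A ∘L D = 0)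
    (hBC : B ∘L C = 0) (hBD : B ∘L D = 1) :
    blockColumn A B ∘L blockRow C D = ContinuousLinearMap.id 𝕜 (WithLp 2 (F × G)) := by
  ext z : 1
  refine WithLp.ofLp_injective 2 (Prod.ext ?_ ?_)
  · simpa using congr($hAC z.fst + $hAD z.snd)
  · simpa using congr($hBC z.fst + $hBD z.snd)

variable [CompleteSpace F] [CompleteSpace G] [CompleteSpace H]

theorem adjoint_blockColumn (A : H →L[𝕜] F) (B : H →L[𝕜] G) :
    adjoint (blockColumn A B) = blockRow (adjoint A) (adjoint B) := by
  refine ((eq_adjoint_iff _ _).mpr fun z x => ?_).symm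
  simp [WithLp.prod_inner_apply, inner_add_left, adjoint_inner_left]

end BlockOperators

section ExtendById

variable {𝕜 : Type*} [RCLike 𝕜] {E F : Type*}
  [NormedAddCommGroup E] [InnerProductSpace 𝕜 E]
  [NormedAddCommGroup F] [InnerProductSpace 𝕜 F] [CompleteSpace E] [CompleteSpace F]

/-- For an isometry `V : E → F`, the operator acting as `V X V*` on the range of `V` and as the
identity on its orthogonal complement. -/
noncomputable def extendById (V : E →L[𝕜] F) (X : E →L[𝕜] E) : F →L[𝕜] F :=
  ContinuousLinearMap.id 𝕜 F - V ∘L adjoint V + V ∘L X ∘L adjoint V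

theorem extendById_one (V : E →L[𝕜] F) : extendById V 1 = 1 := by
  rw [extendById, one_def, id_comp, sub_add_cancel]
  rfl

theorem extendById_add_conj (V : E →L[𝕜] F) (X Y : E →L[𝕜] E) :
    extendById V X + V ∘L Y ∘L adjoint V = extendById V (X + Y) := by
  simp only [extendById, add_comp, comp_add]
  abel

theorem adjoint_extendById (V : E →L[𝕜] F) (X : E →L[𝕜] E) :
    adjoint (extendById V X) = extendById V (adjoint X) := by
  simp only [extendById, map_add, map_sub, adjoint_comp, adjoint_adjoint, adjoint_id, comp_assoc]

variable {V : E →L[𝕜] F} (hV : adjoint V ∘L V = 1)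
include hV

theorem extendById_comp_isometry (X : E →L[𝕜] E) :
    extendById V X ∘L V = V ∘L X := by
  simp only [extendById, add_comp, sub_comp, comp_assoc, hV, one_def, comp_id, id_comp]
  abel

theorem adjoint_comp_extendById (X : E →L[𝕜] E) :
    adjoint V ∘L extendById V X = X ∘L adjoint V := by
  simp only [extendById, comp_add, comp_sub, ← comp_assoc, hV, one_def, comp_id, id_comp]
  abel

theorem extendById_comp_extendById (X Y : E →L[𝕜] E) :
    extendById V X ∘L extendById V Y = extendById V (X ∘L Y) := by
  conv_lhs => rw [extendById]
  simp only [add_comp, sub_comp, comp_assoc, adjoint_comp_extendById hV, id_comp]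
  simp only [extendById, comp_assoc]
  abel

end ExtendById

open ContinuousLinearMap in
/-- Given an isometry `S₁ : E → F`, an isometry `R₁ : E → E` and a co-isometry `R₂ : E → G`
with `R₂ R₁ = 0` and `R₁ R₁* + R₂* R₂ = id_E`, the column operator
`S = (I − S₁S₁* + S₁R₁*S₁*, R₂S₁*)ᵀ : F → F ⊕ G` is a unitary. -/
theorem column_operator_unitary
    {E F G : Type*} [NormedAddCommGroup E] [InnerProductSpace ℂ E] [CompleteSpace E]
    [NormedAddCommGroup F] [InnerProductSpace ℂ F] [CompleteSpace F]
    [NormedAddCommGroup G] [InnerProductSpace ℂ G] [CompleteSpace G]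
    (S₁ : E →L[ℂ] F) (hS₁ : (adjoint S₁) ∘L S₁ = 1)
    (R₁ : E →L[ℂ] E) (hR₁ : (adjoint R₁) ∘L R₁ = 1)
    (R₂ : E →L[ℂ] G) (hR₂ : R₂ ∘L (adjoint R₂) = ContinuousLinearMap.id ℂ G)
    (hR₂R₁ : R₂ ∘L R₁ = 0)
    (hsum : R₁ ∘L (adjoint R₁) + (adjoint R₂) ∘L R₂ = 1)
    (S : F →L[ℂ] WithLp 2 (F × G))
    (hS : ∀ x : F, WithLp.equiv 2 (F × G) (S x) =
      ((ContinuousLinearMap.id ℂ F - S₁ ∘L adjoint S₁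
          + S₁ ∘L (adjoint R₁) ∘L adjoint S₁) x,
       (R₂ ∘L adjoint S₁) x)) :
    (adjoint S) ∘L S = ContinuousLinearMap.id ℂ F ∧
    S ∘L (adjoint S) = ContinuousLinearMap.id ℂ (WithLp 2 (F × G)) := by
  obtain rfl : S = blockColumn (extendById S₁ (adjoint R₁)) (R₂ ∘L adjoint S₁) :=
    ContinuousLinearMap.ext fun x => (WithLp.equiv 2 (F × G)).injective (hS x)
  rw [adjoint_blockColumn, adjoint_extendById, adjoint_adjoint, adjoint_comp, adjoint_adjoint]
  constructor
  · rw [blockRow_comp_blockColumn, extendById_comp_extendById hS₁, comp_assoc,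
      ← comp_assoc (adjoint R₂), extendById_add_conj, hsum, extendById_one]
    rfl
  · refine blockColumn_comp_blockRow_eq_id ?_ ?_ ?_ ?_
    · rw [extendById_comp_extendById hS₁, hR₁, extendById_one]
    · rw [← comp_assoc, extendById_comp_isometry hS₁, comp_assoc, ← adjoint_comp, hR₂R₁,
        map_zero, comp_zero]
    · rw [comp_assoc, adjoint_comp_extendById hS₁, ← comp_assoc, hR₂R₁, zero_comp]
    · rw [comp_assoc, ← comp_assoc (adjoint S₁), hS₁]
      exact hR₂
end

section
/- Let H be a separable Hilbert space, (a_k) an increasing quasicentral approximate unit of positive finite-rank operators with a₀ = 0 and ‖a_k‖ ≤ 1, f_k := (a_k − a_{k−1})^{1/2}, and (U_k) a sequence of partial isometries with pairwise orthogonal final ranges and U_k*U_k equal to the range projection of a_k. Then S := ∑_{k=1}^∞ U_k f_k converges in the strong-* topology and defines an isometry: S*S = id_H. -/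
/-!
The increments `f_k² = a_{k+1} - a_k` telescope, so `∑_{k<n} ‖f_k ξ‖² = re ⟪a_n ξ, ξ⟫ → ‖ξ‖²`.
Since the kernel of `a_{k+1}` lies in that of `f_k`, the operator `f_k` maps into the initial
space of `U_k`, on which `U_k` is isometric, and the vectors `U_k f_k ξ` are pairwise orthogonal
because the final projections are. By Pythagoras the series for `S ξ` converges and
`‖S ξ‖ = ‖ξ‖`. The adjoint series satisfies the Cauchy criterion: by Cauchy–Schwarz,
`‖∑_{k∈s} f_k η_k‖² ≤ ∑_{k∈s} ‖η_k‖²` as soon as `∑_k f_k² ≤ 1`, and Bessel's inequality for the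
orthogonal final projections gives `∑_k ‖U_k* η‖² ≤ ‖η‖²`.
-/

section CStarRing

variable {R : Type*} [NonUnitalNormedRing R] [StarRing R] [CStarRing R] {u v : R}

lemma mul_star_mul_self_of_isIdempotentElem (hu : IsIdempotentElem (star u * u)) :
    u * (star u * u) = u := by
  rw [← sub_eq_zero, ← CStarRing.star_mul_self_eq_zero_iff, star_sub, star_mul, star_mul,
    star_star]
  calc (star u * u * star u - star u) * (u * (star u * u) - u)
      = (star u * u) * (star u * u) * (star u * u) - (star u * u) * (star u * u)
        - (star u * u) * (star u * u) + star u * u := by noncomm_ring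
    _ = 0 := by rw [hu.eq, hu.eq]; abel

lemma star_mul_self_mul_star_of_isIdempotentElem (hu : IsIdempotentElem (star u * u)) :
    star u * u * star u = star u := by
  simpa [mul_assoc] using congrArg star (mul_star_mul_self_of_isIdempotentElem hu)

lemma star_mul_eq_zero_of_mul_star_mul_eq_zero (hu : IsIdempotentElem (star u * u))
    (hv : IsIdempotentElem (star v * v)) (h : u * star u * (v * star v) = 0) :
    star u * v = 0 := by
  rw [← star_mul_self_mul_star_of_isIdempotentElem hu, ← mul_star_mul_self_of_isIdempotentElem hv]
  calc star u * u * star u * (v * (star v * v)) = star u * (u * star u * (v * star v)) * v := by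
        noncomm_ring
    _ = 0 := by rw [h, mul_zero, zero_mul]

end CStarRing

open Filter Topology
open scoped InnerProductSpace

section Orthogonal

variable {𝕜 E ι : Type*} [RCLike 𝕜] [NormedAddCommGroup E] [InnerProductSpace 𝕜 E] {v : ι → E}

lemma norm_sum_sq_eq_sum_norm_sq_of_pairwise_inner_eq_zero
    (hv : Pairwise fun i j => ⟪v i, v j⟫_𝕜 = 0) (s : Finset ι) :
    ‖∑ i ∈ s, v i‖ ^ 2 = ∑ i ∈ s, ‖v i‖ ^ 2 := by
  have : (‖∑ i ∈ s, v i‖ : 𝕜) ^ 2 = ∑ i ∈ s, (‖v i‖ : 𝕜) ^ 2 := by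
    simp only [← inner_self_eq_norm_sq_to_K, sum_inner, inner_sum]
    exact Finset.sum_congr rfl fun i hi =>
      Finset.sum_eq_single_of_mem i hi fun j _ hji => hv hji
  exact_mod_cast this

lemma summable_of_norm_sum_sq_le [CompleteSpace E] {g : ι → ℝ} (hg : Summable g)
    (h : ∀ s : Finset ι, ‖∑ i ∈ s, v i‖ ^ 2 ≤ ∑ i ∈ s, g i) : Summable v := by
  refine summable_iff_vanishing_norm.2 fun ε hε => ?_
  obtain ⟨s, hs⟩ := summable_iff_vanishing_norm.1 hg (ε ^ 2) (by positivity)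
  refine ⟨s, fun t ht => lt_of_pow_lt_pow_left₀ 2 hε.le ?_⟩
  exact (h t).trans_lt ((le_abs_self _).trans_lt (hs t ht))

lemma summable_of_pairwise_inner_eq_zero [CompleteSpace E]
    (hv : Pairwise fun i j => ⟪v i, v j⟫_𝕜 = 0) (h : Summable fun i => ‖v i‖ ^ 2) :
    Summable v :=
  summable_of_norm_sum_sq_le h fun s =>
    (norm_sum_sq_eq_sum_norm_sq_of_pairwise_inner_eq_zero hv s).le

lemma HasSum.norm_sq_of_pairwise_inner_eq_zero {x : E}
    (hv : Pairwise fun i j => ⟪v i, v j⟫_𝕜 = 0) (h : HasSum v x) :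
    HasSum (fun i => ‖v i‖ ^ 2) (‖x‖ ^ 2) := by
  have := h.norm.pow 2
  simp only [norm_sum_sq_eq_sum_norm_sq_of_pairwise_inner_eq_zero hv] at this
  exact this

end Orthogonal

namespace ContinuousLinearMap

variable {𝕜 E F ι : Type*} [RCLike 𝕜] [NormedAddCommGroup E] [InnerProductSpace 𝕜 E]
  [NormedAddCommGroup F] [InnerProductSpace 𝕜 F] [CompleteSpace E]

lemma exists_hasSum_apply_of_summable [Countable ι] (T : ι → E →L[𝕜] F)
    (h : ∀ x, Summable fun i => T i x) : ∃ S : E →L[𝕜] F, ∀ x, HasSum (fun i => T i x) (S x) :=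
  ⟨continuousLinearMapOfTendsto (fun s : Finset ι => ∑ i ∈ s, T i) (f := fun x => ∑' i, T i x)
    (tendsto_pi_nhds.2 fun x => by simp only [sum_apply]; exact (h x).hasSum),
    fun x => (h x).hasSum⟩

section Adjoint

variable [CompleteSpace F]

lemma hasSum_adjoint_apply {T : ι → E →L[𝕜] F} {S : E →L[𝕜] F}
    (hS : ∀ x, HasSum (fun i => T i x) (S x)) {y : F}
    (hy : Summable fun i => adjoint (T i) y) :
    HasSum (fun i => adjoint (T i) y) (adjoint S y) := by
  convert hy.hasSum
  refine ext_inner_left 𝕜 fun x => ?_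
  rw [adjoint_inner_right]
  refine HasSum.unique ?_ (hy.hasSum.mapL (innerSL 𝕜 x))
  simpa only [flip_apply, innerSL_apply_apply, adjoint_inner_right] using
    (hS x).mapL ((innerSL 𝕜).flip y)

lemma norm_apply_eq_of_adjoint_apply_apply {U : E →L[𝕜] F} {x : E} (hx : adjoint U (U x) = x) :
    ‖U x‖ = ‖x‖ := by
  have : ⟪U x, U x⟫_𝕜 = ⟪x, x⟫_𝕜 := by rw [← adjoint_inner_left, hx]
  rw [norm_eq_sqrt_re_inner (𝕜 := 𝕜), norm_eq_sqrt_re_inner (𝕜 := 𝕜), this]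

lemma norm_sum_adjoint_apply_sq_le (g : ι → E →L[𝕜] F) (s : Finset ι)
    (hg : ∀ z, ∑ i ∈ s, ‖g i z‖ ^ 2 ≤ ‖z‖ ^ 2) (y : ι → F) :
    ‖∑ i ∈ s, adjoint (g i) (y i)‖ ^ 2 ≤ ∑ i ∈ s, ‖y i‖ ^ 2 := by
  set z := ∑ i ∈ s, adjoint (g i) (y i)
  have h_inner : ‖z‖ ^ 2 ≤ ∑ i ∈ s, ‖y i‖ * ‖g i z‖ :=
    calc ‖z‖ ^ 2 = RCLike.re ⟪∑ i ∈ s, adjoint (g i) (y i), z⟫_𝕜 := (inner_self_eq_norm_sq z).symm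
      _ = ∑ i ∈ s, RCLike.re ⟪y i, g i z⟫_𝕜 := by
        simp only [sum_inner, adjoint_inner_left, map_sum]
      _ ≤ ∑ i ∈ s, ‖y i‖ * ‖g i z‖ :=
        Finset.sum_le_sum fun i _ => (RCLike.re_le_norm _).trans (norm_inner_le_norm _ _)
  have h_cs := Finset.sum_mul_sq_le_sq_mul_sq s (fun i => ‖y i‖) (fun i => ‖g i z‖)
  have h_nonneg : 0 ≤ ∑ i ∈ s, ‖y i‖ ^ 2 := by positivity
  nlinarith [hg z, mul_le_mul_of_nonneg_left (hg z) h_nonneg]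

end Adjoint

section PartialIsometry

lemma range_le_of_orthogonal_le_ker {f : E →L[𝕜] E} (hf : IsSelfAdjoint f)
    {K : Submodule 𝕜 E} [K.HasOrthogonalProjection] (h : Kᗮ ≤ LinearMap.ker (f : E →ₗ[𝕜] E)) :
    LinearMap.range (f : E →ₗ[𝕜] E) ≤ K :=
  calc LinearMap.range (f : E →ₗ[𝕜] E) ≤ (LinearMap.range (f : E →ₗ[𝕜] E))ᗮᗮ :=
        Submodule.le_orthogonal_orthogonal _
    _ = (LinearMap.ker (f : E →ₗ[𝕜] E))ᗮ := by rw [orthogonal_range, hf.adjoint_eq]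
    _ ≤ Kᗮᗮ := Submodule.orthogonal_le h
    _ = K := K.orthogonal_orthogonal

lemma norm_apply_apply_eq_of_orthogonal_le_ker {U f : E →L[𝕜] E}
    (hU : IsIdempotentElem (star U * U)) (hf : IsSelfAdjoint f)
    (h : (LinearMap.range ((star U * U : E →L[𝕜] E) : E →ₗ[𝕜] E))ᗮ ≤
      LinearMap.ker (f : E →ₗ[𝕜] E)) (x : E) :
    ‖U (f x)‖ = ‖f x‖ := by
  obtain ⟨_, -⟩ := isStarProjection_iff_eq_starProjection_range.1
    (⟨hU, .star_mul_self U⟩ : IsStarProjection (star U * U))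
  obtain ⟨y, hy⟩ : f x ∈ LinearMap.range ((star U * U : E →L[𝕜] E) : E →ₗ[𝕜] E) :=
    range_le_of_orthogonal_le_ker hf h (LinearMap.mem_range_self _ x)
  rw [← coe_coe, ← hy]
  exact norm_apply_eq_of_adjoint_apply_apply (DFunLike.congr_fun hU.eq y)

lemma inner_apply_eq_zero_of_mul_star_mul_eq_zero {U V : E →L[𝕜] E}
    (hU : IsIdempotentElem (star U * U)) (hV : IsIdempotentElem (star V * V))
    (h : U * star U * (V * star V) = 0) (x y : E) :
    ⟪U x, V y⟫_𝕜 = 0 := by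
  have h0 : adjoint U ∘L V = 0 := star_mul_eq_zero_of_mul_star_mul_eq_zero hU hV h
  rw [← adjoint_inner_right, ← comp_apply, h0, zero_apply, inner_zero_right]

lemma sum_norm_adjoint_apply_sq_le {U : ι → E →L[𝕜] E}
    (hU : ∀ i, IsIdempotentElem (star (U i) * U i))
    (horth : Pairwise fun i j => ∀ x y, ⟪U i x, U j y⟫_𝕜 = 0) (s : Finset ι) (y : E) :
    ∑ i ∈ s, ‖adjoint (U i) y‖ ^ 2 ≤ ‖y‖ ^ 2 := by
  set w := ∑ i ∈ s, U i (adjoint (U i) y)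
  have h_norm : ‖w‖ ^ 2 = ∑ i ∈ s, ‖adjoint (U i) y‖ ^ 2 := by
    rw [norm_sum_sq_eq_sum_norm_sq_of_pairwise_inner_eq_zero (𝕜 := 𝕜)
      (fun i j hij => horth hij _ _)]
    refine Finset.sum_congr rfl fun i _ => ?_
    rw [norm_apply_eq_of_adjoint_apply_apply]
    exact congr($(star_mul_self_mul_star_of_isIdempotentElem (hU i)) y)
  have h_inner : ∑ i ∈ s, ‖adjoint (U i) y‖ ^ 2 = RCLike.re ⟪w, y⟫_𝕜 := by
    simp only [w, sum_inner, map_sum]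
    exact Finset.sum_congr rfl fun i _ => by
      rw [← adjoint_inner_right (U i) (adjoint (U i) y) y, inner_self_eq_norm_sq]
  have h_cs : RCLike.re ⟪w, y⟫_𝕜 ≤ ‖w‖ * ‖y‖ :=
    (RCLike.re_le_norm _).trans (norm_inner_le_norm _ _)
  nlinarith [norm_nonneg w, norm_nonneg y]

lemma summable_adjoint_comp_apply {U g : ι → E →L[𝕜] E}
    (hU : ∀ i, IsIdempotentElem (star (U i) * U i))
    (horth : Pairwise fun i j => ∀ x y, ⟪U i x, U j y⟫_𝕜 = 0)
    (hg : ∀ (s : Finset ι) z, ∑ i ∈ s, ‖g i z‖ ^ 2 ≤ ‖z‖ ^ 2) (y : E) :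
    Summable fun i => adjoint (U i ∘L g i) y := by
  simp only [adjoint_comp, comp_apply]
  exact summable_of_norm_sum_sq_le
    (summable_of_sum_le (fun _ => by positivity) (sum_norm_adjoint_apply_sq_le hU horth · y))
    fun s => norm_sum_adjoint_apply_sq_le g s (hg s) _

end PartialIsometry

section Telescoping

variable {a f : ℕ → E →L[𝕜] E}

lemma re_inner_apply_eq_sum_norm_sq (ha0 : a 0 = 0)
    (hfa : ∀ k, adjoint (f k) ∘L f k = a (k + 1) - a k) (n : ℕ) (x : E) :
    RCLike.re ⟪a n x, x⟫_𝕜 = ∑ k ∈ Finset.range n, ‖f k x‖ ^ 2 := by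
  have : a n = ∑ k ∈ Finset.range n, adjoint (f k) ∘L f k := by
    simp only [hfa, Finset.sum_range_sub, ha0, sub_zero]
  simp only [this, sum_apply, sum_inner, map_sum, apply_norm_sq_eq_inner_adjoint_left]

lemma apply_eq_zero_of_inner_apply_eq_zero (ha0 : a 0 = 0)
    (hfa : ∀ k, adjoint (f k) ∘L f k = a (k + 1) - a k) {k n : ℕ} (hk : k < n) {x : E}
    (hx : ⟪a n x, x⟫_𝕜 = 0) : f k x = 0 := by
  have h := re_inner_apply_eq_sum_norm_sq ha0 hfa n x
  rw [hx, map_zero, eq_comm, Finset.sum_eq_zero_iff_of_nonneg fun _ _ => by positivity] at h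
  simpa using h k (Finset.mem_range.2 hk)

lemma hasSum_norm_sq_apply (ha0 : a 0 = 0)
    (hfa : ∀ k, adjoint (f k) ∘L f k = a (k + 1) - a k) {x : E}
    (hx : Tendsto (fun n => a n x) atTop (𝓝 x)) :
    HasSum (fun k => ‖f k x‖ ^ 2) (‖x‖ ^ 2) := by
  rw [hasSum_iff_tendsto_nat_of_nonneg fun _ => by positivity]
  simp_rw [← re_inner_apply_eq_sum_norm_sq ha0 hfa, ← inner_self_eq_norm_sq (𝕜 := 𝕜) x]
  exact (RCLike.continuous_re.tendsto _).comp (hx.inner (𝕜 := 𝕜) tendsto_const_nhds)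

end Telescoping

end ContinuousLinearMap

open ContinuousLinearMap in
theorem sum_partial_isometries_isometry_general
    {H : Type*} [NormedAddCommGroup H] [InnerProductSpace ℂ H] [CompleteSpace H]
    (a : ℕ → (H →L[ℂ] H))
    (ha0 : a 0 = 0)
    (hainc : ∀ k, (a (k + 1) - a k).IsPositive)
    (haunit : ∀ ξ : H, Filter.Tendsto (fun k => a k ξ) Filter.atTop (nhds ξ))
    (f : ℕ → (H →L[ℂ] H)) (hf : ∀ k, f k = CFC.sqrt (a (k + 1) - a k))
    (U : ℕ → (H →L[ℂ] H))
    -- each `U_k` is a partial isometry …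
    (hpi : ∀ k, ((adjoint (U k)) ∘L U k) ∘L ((adjoint (U k)) ∘L U k) = (adjoint (U k)) ∘L U k)
    -- … whose initial projection is the range projection of `a_{k+1}` …
    (hinit : ∀ k, LinearMap.range (((adjoint (U k)) ∘L U k) : H →ₗ[ℂ] H) =
      LinearMap.range ((a (k + 1)) : H →ₗ[ℂ] H))
    -- … and whose final projections are pairwise orthogonal
    (hfinal : ∀ j k, j ≠ k →
      (U j ∘L adjoint (U j)) ∘L (U k ∘L adjoint (U k)) = 0) :
    ∃ S : H →L[ℂ] H,
      (∀ ξ : H, HasSum (fun k : ℕ => U k (f k ξ)) (S ξ)) ∧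
      (∀ ξ : H, HasSum (fun k : ℕ => f k ((adjoint (U k)) ξ)) ((adjoint S) ξ)) ∧
      (adjoint S) ∘L S = 1 := by
  have hf_sa : ∀ k, IsSelfAdjoint (f k) := fun k => hf k ▸ .of_nonneg (CFC.sqrt_nonneg _)
  have hfa : ∀ k, adjoint (f k) ∘L f k = a (k + 1) - a k := fun k => by
    rw [(hf_sa k).adjoint_eq, hf k]
    exact CFC.sqrt_mul_sqrt_self _ ((nonneg_iff_isPositive _).2 (hainc k))
  have hsq : ∀ ξ, HasSum (fun k => ‖f k ξ‖ ^ 2) (‖ξ‖ ^ 2) := fun ξ =>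
    hasSum_norm_sq_apply ha0 hfa (haunit ξ)
  have hUf : ∀ k ξ, ‖U k (f k ξ)‖ = ‖f k ξ‖ := fun k =>
    norm_apply_apply_eq_of_orthogonal_le_ker (hpi k) (hf_sa k) fun η hη => by
      have hη' : ⟪a (k + 1) η, η⟫_ℂ = 0 := (hinit k ▸ hη) _ (LinearMap.mem_range_self _ η)
      exact apply_eq_zero_of_inner_apply_eq_zero ha0 hfa k.lt_succ_self hη'
  have horth : Pairwise fun j k => ∀ x y, ⟪U j x, U k y⟫_ℂ = 0 := fun j k hjk =>
    inner_apply_eq_zero_of_mul_star_mul_eq_zero (hpi j) (hpi k) (hfinal j k hjk)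
  obtain ⟨S, hS⟩ := exists_hasSum_apply_of_summable (fun k => U k ∘L f k) fun ξ =>
    summable_of_pairwise_inner_eq_zero (fun j k hjk => horth hjk _ _)
      (by simpa only [comp_apply, hUf] using (hsq ξ).summable)
  refine ⟨S, hS, fun η => ?_, (norm_map_iff_adjoint_comp_self S).1 fun ξ => ?_⟩
  · have hsum := summable_adjoint_comp_apply hpi horth
      (fun s ξ => sum_le_hasSum s (fun _ _ => by positivity) (hsq ξ)) η
    simpa only [adjoint_comp, comp_apply, (hf_sa _).adjoint_eq] using
      hasSum_adjoint_apply (T := fun k => U k ∘L f k) hS hsum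
  · have hnorm : HasSum (fun k => ‖U k (f k ξ)‖ ^ 2) (‖S ξ‖ ^ 2) :=
      (hS ξ).norm_sq_of_pairwise_inner_eq_zero fun j k hjk => horth hjk _ _
    simp only [hUf] at hnorm
    exact (sq_eq_sq₀ (norm_nonneg _) (norm_nonneg _)).1 (hnorm.unique (hsq ξ))

open ContinuousLinearMap in
/-- Given an increasing approximate unit `(a_k)` of positive finite-rank contractions with
`a₀ = 0`, `f_k := (a_k − a_{k−1})^{1/2}` (here indexed so that `f k = (a_{k+1} − a_k)^{1/2}`),
and partial isometries `(U_k)` with pairwise orthogonal final ranges whose initial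
projections are the range projections of the `a_k`, the series `S = ∑_k U_k f_k` converges
in the strong-* topology and defines an isometry `S*S = id`. -/
theorem sum_partial_isometries_isometry
    {H : Type*} [NormedAddCommGroup H] [InnerProductSpace ℂ H] [CompleteSpace H]
    (a : ℕ → (H →L[ℂ] H))
    (ha0 : a 0 = 0)
    (hapos : ∀ k, (a k).IsPositive)
    (hainc : ∀ k, (a (k + 1) - a k).IsPositive)
    (hanorm : ∀ k, ‖a k‖ ≤ 1)
    (hafr : ∀ k, FiniteDimensional ℂ (LinearMap.range ((a k) : H →ₗ[ℂ] H)))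
    (haunit : ∀ ξ : H, Filter.Tendsto (fun k => a k ξ) Filter.atTop (nhds ξ))
    (f : ℕ → (H →L[ℂ] H)) (hf : ∀ k, f k = CFC.sqrt (a (k + 1) - a k))
    (U : ℕ → (H →L[ℂ] H))
    -- each `U_k` is a partial isometry …
    (hpi : ∀ k, ((adjoint (U k)) ∘L U k) ∘L ((adjoint (U k)) ∘L U k) = (adjoint (U k)) ∘L U k)
    (hpisa : ∀ k, IsSelfAdjoint ((adjoint (U k)) ∘L U k))
    -- … whose initial projection is the range projection of `a_{k+1}` …
    (hinit : ∀ k, LinearMap.range (((adjoint (U k)) ∘L U k) : H →ₗ[ℂ] H) =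
      LinearMap.range ((a (k + 1)) : H →ₗ[ℂ] H))
    -- … and whose final projections are pairwise orthogonal
    (hfinal : ∀ j k, j ≠ k →
      (U j ∘L adjoint (U j)) ∘L (U k ∘L adjoint (U k)) = 0) :
    ∃ S : H →L[ℂ] H,
      (∀ ξ : H, HasSum (fun k : ℕ => U k (f k ξ)) (S ξ)) ∧
      (∀ ξ : H, HasSum (fun k : ℕ => f k ((adjoint (U k)) ξ)) ((adjoint S) ξ)) ∧
      (adjoint S) ∘L S = 1 :=
  sum_partial_isometries_isometry_general a ha0 hainc haunit f hf U hpi hinit hfinal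
end

section
/- Let (f_k) be a sequence of positive contractions on a Hilbert space with ∑_k f_k² = 1 strictly (strongly), and let b be a bounded operator with ‖[b, f_k]‖ ≤ ε/2^k for all k ≥ 1. Then ‖b − ∑_{k=1}^∞ f_k b f_k‖ ≤ ε, where the series converges strongly. -/
/-!
Since `f_k b f_k = f_k [b, f_k] + f_k² b` and `∑ f_k² = 1` strongly, the sandwich series sums
strongly to `b + ∑ f_k [b, f_k]`. The correction series converges in norm, and its norm is at
most `∑ ‖[b, f_k]‖ ≤ ∑ ε / 2^(k+1) = ε` because each `f_k` is a contraction.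
-/

namespace ContinuousLinearMap

variable {𝕜 E ι : Type*} [NontriviallyNormedField 𝕜] [NormedAddCommGroup E] [NormedSpace 𝕜 E]

theorem hasSum_comp_comp_apply_of_hasSum_comp_commutator (f : ι → E →L[𝕜] E) (b : E →L[𝕜] E)
    (hf : ∀ ξ, HasSum (fun k => f k (f k ξ)) ξ) {d : E →L[𝕜] E}
    (hd : HasSum (fun k => f k ∘L (b ∘L f k - f k ∘L b)) d) (ξ : E) :
    HasSum (fun k => f k (b (f k ξ))) ((b + d) ξ) := by
  have hdξ : HasSum (fun k => (f k ∘L (b ∘L f k - f k ∘L b)) ξ) (d ξ) :=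
    hd.mapL (apply 𝕜 E ξ)
  convert hdξ.add (hf (b ξ)) using 1
  · funext k
    simp only [comp_apply, sub_apply, map_sub, sub_add_cancel]
  · rw [add_apply, add_comm]

theorem norm_comp_commutator_le_of_norm_le_one {f : E →L[𝕜] E} (b : E →L[𝕜] E) (hf : ‖f‖ ≤ 1) :
    ‖f ∘L (b ∘L f - f ∘L b)‖ ≤ ‖b ∘L f - f ∘L b‖ :=
  (opNorm_comp_le _ _).trans (mul_le_of_le_one_left (norm_nonneg _) hf)

end ContinuousLinearMap

theorem hasSum_div_two_pow_succ (a : ℝ) : HasSum (fun k : ℕ => a / 2 ^ (k + 1)) a := by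
  simpa only [pow_succ', div_div] using hasSum_geometric_two' a

open ContinuousLinearMap in
theorem quasicentral_sandwich_estimate_general
    {H : Type*} [NormedAddCommGroup H] [InnerProductSpace ℂ H] [CompleteSpace H]
    (f : ℕ → (H →L[ℂ] H))
    (hfnorm : ∀ k, ‖f k‖ ≤ 1)
    (hfsum : ∀ ξ : H, HasSum (fun k : ℕ => f k (f k ξ)) ξ)
    (b : H →L[ℂ] H) (ε : ℝ)
    (hcomm : ∀ k : ℕ, ‖b ∘L f k - f k ∘L b‖ ≤ ε / 2 ^ (k + 1)) :
    ∃ c : H →L[ℂ] H,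
      (∀ ξ : H, HasSum (fun k : ℕ => f k (b (f k ξ))) (c ξ)) ∧
      ‖b - c‖ ≤ ε := by
  set g := fun k => f k ∘L (b ∘L f k - f k ∘L b)
  have hg : ∀ k, ‖g k‖ ≤ ε / 2 ^ (k + 1) := fun k =>
    (norm_comp_commutator_le_of_norm_le_one b (hfnorm k)).trans (hcomm k)
  have hgsum : Summable g := .of_norm_bounded (hasSum_div_two_pow_succ ε).summable hg
  refine ⟨b + ∑' k, g k,
    hasSum_comp_comp_apply_of_hasSum_comp_commutator f b hfsum hgsum.hasSum, ?_⟩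
  rw [sub_add_cancel_left, norm_neg]
  exact tsum_of_norm_bounded (hasSum_div_two_pow_succ ε) hg

open ContinuousLinearMap in
/-- If `(f_k)` are positive contractions with `∑_k f_k² = 1` strongly and
`‖[b, f_k]‖ ≤ ε/2^k`, then `‖b − ∑_k f_k b f_k‖ ≤ ε`, where the series `∑_k f_k b f_k`
converges strongly. (Here the sequence is indexed so that `f k` is the `(k+1)`-st term.) -/
theorem quasicentral_sandwich_estimate
    {H : Type*} [NormedAddCommGroup H] [InnerProductSpace ℂ H] [CompleteSpace H]
    (f : ℕ → (H →L[ℂ] H))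
    (hfpos : ∀ k, (f k).IsPositive)
    (hfnorm : ∀ k, ‖f k‖ ≤ 1)
    (hfsum : ∀ ξ : H, HasSum (fun k : ℕ => f k (f k ξ)) ξ)
    (b : H →L[ℂ] H) (ε : ℝ) (hε : 0 ≤ ε)
    (hcomm : ∀ k : ℕ, ‖b ∘L f k - f k ∘L b‖ ≤ ε / 2 ^ (k + 1)) :
    ∃ c : H →L[ℂ] H,
      (∀ ξ : H, HasSum (fun k : ℕ => f k (b (f k ξ))) (c ξ)) ∧
      ‖b - c‖ ≤ ε :=
  quasicentral_sandwich_estimate_general f hfnorm hfsum b ε hcomm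
end
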